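/- arXiv:2102.06575 — 2 statements merged into one kernel-verified Lean document; each statement's English description precedes it below -/
import Mathlib

section
/- The BQR loss z ↦ L(y,z), where L(y,z) = -(y·log p(z) + (1-y)·log(1 - p(z))) with p(z) = 1 - τ·exp((τ-1)z) for z ≥ 0 and p(z) = (1-τ)·exp(τz) for z < 0, is Lipschitz continuous on ℝ with Lipschitz constant max(τ, 1-τ), for each y ∈ {0,1}. -/
/-! On each half-line, `log p` and `log (1 - p)` are either affine in `z` or of the form
`log (1 - c * exp (s * z))` with `s * z ≤ 0`, whose derivative is at most `|s| * c / (1 - c)`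
in absolute value; for `log p` both slopes are bounded by `τ`. Bounds on the two half-lines glue
through `0` by the triangle inequality, and the symmetry `1 - p_τ(z) = p_{1-τ}(-z)` turns the
bound `τ` for `log p` into the bound `1 - τ` for `log (1 - p)`. -/

open Real Set

lemma abs_sub_le_mul_of_Iic_of_Ici {f : ℝ → ℝ} {K c : ℝ}
    (hle : ∀ a ≤ c, ∀ b ≤ c, |f b - f a| ≤ K * |b - a|)
    (hge : ∀ a ≥ c, ∀ b ≥ c, |f b - f a| ≤ K * |b - a|) (a b : ℝ) :
    |f b - f a| ≤ K * |b - a| := by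
  wlog hab : a ≤ b generalizing a b
  · rw [abs_sub_comm, abs_sub_comm b]
    exact this b a (le_of_not_ge hab)
  rcases le_total b c with hbc | hcb
  · exact hle a (hab.trans hbc) b hbc
  rcases le_total c a with hca | hac
  · exact hge a hca b (hca.trans hab)
  calc |f b - f a| ≤ |f b - f c| + |f c - f a| := abs_sub_le _ _ _
    _ ≤ K * |b - c| + K * |c - a| := add_le_add (hge c le_rfl b hcb) (hle a hac c le_rfl)
    _ = K * |b - a| := by
      rw [abs_of_nonneg (sub_nonneg.2 hcb), abs_of_nonneg (sub_nonneg.2 hac),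
        abs_of_nonneg (sub_nonneg.2 hab)]
      ring

lemma log_mul_exp_sub_log_mul_exp {c : ℝ} (hc : c ≠ 0) (s a b : ℝ) :
    log (c * exp (s * b)) - log (c * exp (s * a)) = s * (b - a) := by
  rw [log_mul hc (exp_ne_zero _), log_mul hc (exp_ne_zero _), log_exp, log_exp]
  ring

lemma abs_log_one_sub_mul_exp_sub_le {S : Set ℝ} (hS : Convex ℝ S) {c s : ℝ} (hc₀ : 0 ≤ c)
    (hc₁ : c < 1) (hsS : ∀ z ∈ S, s * z ≤ 0) {a b : ℝ} (ha : a ∈ S) (hb : b ∈ S) :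
    |log (1 - c * exp (s * b)) - log (1 - c * exp (s * a))| ≤ |s| * c / (1 - c) * |b - a| := by
  have hexp_le : ∀ z ∈ S, exp (s * z) ≤ 1 := fun z hz => exp_le_one_iff.2 (hsS z hz)
  have hden : ∀ z ∈ S, 0 < 1 - c * exp (s * z) := fun z hz => by
    nlinarith [hexp_le z hz]
  have hderiv : ∀ z ∈ S, HasDerivWithinAt (fun z => log (1 - c * exp (s * z)))
      (-(c * s * exp (s * z)) / (1 - c * exp (s * z))) S z := fun z hz =>
    ((((hasDerivAt_id' z).const_mul s).exp.const_mul c).const_sub 1 |>.log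
      (hden z hz).ne').hasDerivWithinAt.congr_deriv (by ring)
  have hbound : ∀ z ∈ S,
      ‖-(c * s * exp (s * z)) / (1 - c * exp (s * z))‖ ≤ |s| * c / (1 - c) := by
    intro z hz
    rw [Real.norm_eq_abs, abs_div, abs_neg, abs_mul, abs_mul, abs_of_nonneg hc₀,
      abs_of_pos (exp_pos _), abs_of_pos (hden z hz), div_le_div_iff₀ (hden z hz) (by linarith)]
    nlinarith [hexp_le z hz, mul_nonneg hc₀ (abs_nonneg s)]
  simpa only [Real.norm_eq_abs] using
    hS.norm_image_sub_le_of_norm_hasDerivWithin_le hderiv hbound ha hb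

noncomputable def bqrProb (τ z : ℝ) : ℝ :=
  if 0 ≤ z then 1 - τ * exp ((τ - 1) * z) else (1 - τ) * exp (τ * z)

lemma bqrProb_of_nonneg {τ z : ℝ} (hz : 0 ≤ z) : bqrProb τ z = 1 - τ * exp ((τ - 1) * z) :=
  if_pos hz

lemma bqrProb_of_nonpos {τ z : ℝ} (hz : z ≤ 0) : bqrProb τ z = (1 - τ) * exp (τ * z) := by
  rcases hz.lt_or_eq with hz | rfl
  · exact if_neg hz.not_ge
  · simp [bqrProb]

lemma one_sub_bqrProb (τ z : ℝ) : 1 - bqrProb τ z = bqrProb (1 - τ) (-z) := by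
  rcases le_total 0 z with hz | hz
  · rw [bqrProb_of_nonneg hz, bqrProb_of_nonpos (neg_nonpos.2 hz)]
    ring_nf
  · rw [bqrProb_of_nonpos hz, bqrProb_of_nonneg (neg_nonneg.2 hz)]
    ring_nf

lemma abs_log_bqrProb_sub_le {τ : ℝ} (hτ : τ ∈ Ioo 0 1) (a b : ℝ) :
    |log (bqrProb τ b) - log (bqrProb τ a)| ≤ τ * |b - a| := by
  obtain ⟨hτ₀, hτ₁⟩ := hτ
  refine abs_sub_le_mul_of_Iic_of_Ici (f := fun z => log (bqrProb τ z)) (c := 0)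
    (fun a ha b hb => ?_) (fun a ha b hb => ?_) a b
  · rw [bqrProb_of_nonpos ha, bqrProb_of_nonpos hb, log_mul_exp_sub_log_mul_exp (by linarith),
      abs_mul, abs_of_pos hτ₀]
  · rw [bqrProb_of_nonneg ha, bqrProb_of_nonneg hb]
    calc _ ≤ |τ - 1| * τ / (1 - τ) * |b - a| :=
          abs_log_one_sub_mul_exp_sub_le (convex_Ici 0) hτ₀.le hτ₁
            (fun z hz => mul_nonpos_of_nonpos_of_nonneg (by linarith) hz) ha hb
      _ = τ * |b - a| := by
        rw [abs_of_neg (by linarith : τ - 1 < 0), neg_sub]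
        field_simp [(by linarith : 1 - τ ≠ 0)]

lemma abs_log_one_sub_bqrProb_sub_le {τ : ℝ} (hτ : τ ∈ Ioo 0 1) (a b : ℝ) :
    |log (1 - bqrProb τ b) - log (1 - bqrProb τ a)| ≤ (1 - τ) * |b - a| := by
  have h := abs_log_bqrProb_sub_le (τ := 1 - τ) ⟨by linarith [hτ.2], by linarith [hτ.1]⟩ (-a) (-b)
  rwa [neg_sub_neg, abs_sub_comm a, ← one_sub_bqrProb, ← one_sub_bqrProb] at h

theorem bqr_loss_lipschitz (τ : ℝ) (hτ : τ ∈ Set.Ioo (0:ℝ) 1)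
    (p : ℝ → ℝ)
    (hp : ∀ z, p z = if 0 ≤ z then 1 - τ * Real.exp ((τ - 1) * z)
                     else (1 - τ) * Real.exp (τ * z))
    (L : ℝ → ℝ → ℝ)
    (hL : ∀ y z, L y z = -(y * Real.log (p z) + (1 - y) * Real.log (1 - p z)))
    (y : ℝ) (hy : y = 0 ∨ y = 1) :
    ∀ z₁ z₂ : ℝ, |L y z₂ - L y z₁| ≤ max τ (1 - τ) * |z₂ - z₁| := by
  obtain rfl : p = bqrProb τ := funext hp
  intro z₁ z₂
  rcases hy with rfl | rfl
  · simp only [hL, zero_mul, zero_add, sub_zero, one_mul, neg_sub_neg]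
    rw [abs_sub_comm]
    exact (abs_log_one_sub_bqrProb_sub_le hτ z₁ z₂).trans (by gcongr; exact le_max_right _ _)
  · simp only [hL, one_mul, sub_self, zero_mul, add_zero, neg_sub_neg]
    rw [abs_sub_comm]
    exact (abs_log_bqrProb_sub_le hτ z₁ z₂).trans (by gcongr; exact le_max_left _ _)
end

section
/- Expected excess risk curvature bound: there exist constants c₁, c₂ > 0 depending only on τ ∈ (0,1) and M > 0 such that for all f, f* ∈ [-M, M], c₁·(f - f*)² ≤ E_y[L(y,f) - L(y,f*)] ≤ c₂·(f - f*)², where y is Bernoulli with P(y=1) = p(f*), p is the BQR link, and L is the BQR loss; moreover one may take c₂ = τ(1-τ)/2. -/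
/-!
Write `a = p f*`. The excess risk `x ↦ KL(Ber a ‖ Ber (p x))` vanishes at `f*` and has derivative
`p' x * (p x - a) / (p x * (1 - p x))`. For the BQR link, `0 ≤ p' ≤ p (1 - p)`, `p' ≤ τ (1 - τ)`
everywhere and `p' ≥ m := τ (1 - τ) e^{-M}` on `[-M, M]`. By the mean value theorem
`(p x - a) (x - f*)` lies between `m (x - f*)²` and `τ (1 - τ) (x - f*)²`, while the factor
`p' / (p (1 - p))` lies between `4 p'` and `1`. Integrating these bounds on the derivative from
`f*` gives `2 m² (x - f*)² ≤ KL ≤ τ (1 - τ) / 2 * (x - f*)²`.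
-/

open Real Set Filter

theorem exists_mem_uIcc_sub_eq_mul_sub {f f' : ℝ → ℝ} {a b : ℝ}
    (hf : ∀ x ∈ uIcc a b, HasDerivAt f (f' x) x) :
    ∃ c ∈ uIcc a b, f b - f a = f' c * (b - a) := by
  have key : ∀ {a b : ℝ}, a < b → (∀ x ∈ Icc a b, HasDerivAt f (f' x) x) →
      ∃ c ∈ Icc a b, f b - f a = f' c * (b - a) := by
    intro a b hab hf
    obtain ⟨c, hc, hslope⟩ := exists_hasDerivAt_eq_slope f f' hab
      (fun x hx => (hf x hx).continuousAt.continuousWithinAt)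
      (fun x hx => hf x (Ioo_subset_Icc_self hx))
    exact ⟨c, Ioo_subset_Icc_self hc, by rw [hslope]; field_simp [(sub_pos.2 hab).ne']⟩
  rcases lt_trichotomy a b with hab | rfl | hba
  · rw [uIcc_of_le hab.le] at hf ⊢
    exact key hab hf
  · exact ⟨a, left_mem_uIcc, by ring⟩
  · rw [uIcc_of_ge hba.le] at hf ⊢
    obtain ⟨c, hc, h⟩ := key hba hf
    exact ⟨c, hc, by linarith⟩

theorem le_of_hasDerivAt_of_nonneg_mul_sub {H H' : ℝ → ℝ} {x₀ x : ℝ}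
    (hH : ∀ y ∈ uIcc x₀ x, HasDerivAt H (H' y) y)
    (hsign : ∀ y ∈ uIcc x₀ x, 0 ≤ H' y * (y - x₀)) : H x₀ ≤ H x := by
  have hcont : ContinuousOn H (uIcc x₀ x) :=
    fun y hy => (hH y hy).continuousAt.continuousWithinAt
  have hderiv : ∀ y ∈ interior (uIcc x₀ x), HasDerivWithinAt H (H' y) (interior (uIcc x₀ x)) y :=
    fun y hy => (hH y (interior_subset hy)).hasDerivWithinAt
  rcases le_total x₀ x with hle | hle
  · have hmono := monotoneOn_of_hasDerivWithinAt_nonneg (convex_uIcc x₀ x) hcont hderiv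
      fun y hy => by
        have hy' := hsign y (interior_subset hy)
        rw [uIcc_of_le hle, interior_Icc] at hy
        exact nonneg_of_mul_nonneg_left hy' (sub_pos.2 hy.1)
    exact hmono left_mem_uIcc right_mem_uIcc hle
  · have hanti := antitoneOn_of_hasDerivWithinAt_nonpos (convex_uIcc x₀ x) hcont hderiv
      fun y hy => by
        have hy' := hsign y (interior_subset hy)
        rw [uIcc_of_ge hle, interior_Icc] at hy
        nlinarith [hy.2]
    exact hanti right_mem_uIcc left_mem_uIcc hle

theorem mul_sq_le_sub_of_hasDerivAt {F F' : ℝ → ℝ} {c x₀ x : ℝ}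
    (hF : ∀ y ∈ uIcc x₀ x, HasDerivAt F (F' y) y)
    (hF' : ∀ y ∈ uIcc x₀ x, 2 * c * (y - x₀) ^ 2 ≤ F' y * (y - x₀)) :
    c * (x - x₀) ^ 2 ≤ F x - F x₀ := by
  have hsq : ∀ y, HasDerivAt (fun z => c * (z - x₀) ^ 2) (2 * c * (y - x₀)) y := fun y => by
    simpa [mul_comm, mul_left_comm, mul_assoc] using
      (((hasDerivAt_id y).sub_const x₀).pow 2).const_mul c
  have := le_of_hasDerivAt_of_nonneg_mul_sub (H := fun z => F z - c * (z - x₀) ^ 2)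
    (fun y hy => (hF y hy).sub (hsq y)) fun y hy => by nlinarith [hF' y hy]
  linarith

theorem sub_le_mul_sq_of_hasDerivAt {F F' : ℝ → ℝ} {c x₀ x : ℝ}
    (hF : ∀ y ∈ uIcc x₀ x, HasDerivAt F (F' y) y)
    (hF' : ∀ y ∈ uIcc x₀ x, F' y * (y - x₀) ≤ 2 * c * (y - x₀) ^ 2) :
    F x - F x₀ ≤ c * (x - x₀) ^ 2 := by
  have := mul_sq_le_sub_of_hasDerivAt (F := fun z => -F z) (c := -c)
    (fun y hy => (hF y hy).neg) fun y hy => by nlinarith [hF' y hy]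
  linarith

theorem hasDerivAt_ite_le {g g' h h' : ℝ → ℝ} {c : ℝ}
    (hg : ∀ x, HasDerivAt g (g' x) x) (hh : ∀ x, HasDerivAt h (h' x) x)
    (hc : g c = h c) (hc' : g' c = h' c) (x : ℝ) :
    HasDerivAt (fun z => if c ≤ z then g z else h z) (if c ≤ x then g' x else h' x) x := by
  rcases lt_trichotomy x c with hx | rfl | hx
  · rw [if_neg hx.not_ge]
    refine (hh x).congr_of_eventuallyEq ?_
    filter_upwards [Iio_mem_nhds hx] with z hz
    rw [if_neg (not_le.2 hz)]
  · rw [if_pos le_rfl]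
    have hright : HasDerivWithinAt (fun z => if x ≤ z then g z else h z) (g' x) (Ici x) x :=
      (hg x).hasDerivWithinAt.congr (fun z hz => if_pos hz) (if_pos le_rfl)
    have hleft : HasDerivWithinAt (fun z => if x ≤ z then g z else h z) (g' x) (Iic x) x := by
      rw [hc']
      refine (hh x).hasDerivWithinAt.congr (fun z hz => ?_) (by rw [if_pos le_rfl, hc])
      rcases (mem_Iic.1 hz).eq_or_lt with rfl | hlt
      · rw [if_pos le_rfl, hc]
      · rw [if_neg (not_le.2 hlt)]
    have := hleft.union hright
    rw [Iic_union_Ici] at this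
    exact this.hasDerivAt univ_mem
  · rw [if_pos hx.le]
    refine (hg x).congr_of_eventuallyEq ?_
    filter_upwards [Ioi_mem_nhds hx] with z hz
    rw [if_pos (le_of_lt hz)]

noncomputable def bernoulliKL (a b : ℝ) : ℝ :=
  -(a * log (b / a)) - (1 - a) * log ((1 - b) / (1 - a))

theorem bernoulliKL_self (a : ℝ) : bernoulliKL a a = 0 := by
  simp [bernoulliKL]

theorem hasDerivAt_bernoulliKL_comp {p : ℝ → ℝ} {a d x : ℝ} (ha : a ∈ Ioo 0 1)
    (hp : HasDerivAt p d x) (hpx : p x ∈ Ioo 0 1) :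
    HasDerivAt (fun y => bernoulliKL a (p y)) (d * (p x - a) / (p x * (1 - p x))) x := by
  obtain ⟨ha₀, ha₁⟩ := ha
  obtain ⟨hp₀, hp₁⟩ := hpx
  have hlog := (hp.div_const a).log (div_pos hp₀ ha₀).ne'
  have hlog₁ := ((hp.const_sub 1).div_const (1 - a)).log
    (div_pos (sub_pos.2 hp₁) (sub_pos.2 ha₁)).ne'
  refine ((hlog.const_mul a).neg.sub (hlog₁.const_mul (1 - a))).congr_deriv ?_
  field_simp [(sub_pos.2 hp₁).ne', (sub_pos.2 ha₁).ne']
  ring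

section Link

variable {p p' : ℝ → ℝ} {x₀ x : ℝ}

theorem mul_sq_le_bernoulliKL_comp (hp : ∀ y, HasDerivAt p (p' y) y)
    (hp01 : ∀ y, p y ∈ Ioo 0 1) {m : ℝ} (hm : 0 ≤ m) (hmp' : ∀ y ∈ uIcc x₀ x, m ≤ p' y) :
    2 * m ^ 2 * (x - x₀) ^ 2 ≤ bernoulliKL (p x₀) (p x) := by
  have h := mul_sq_le_sub_of_hasDerivAt (c := 2 * m ^ 2)
    (fun y _ => hasDerivAt_bernoulliKL_comp (hp01 x₀) (hp y) (hp01 y)) fun y hy => by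
      obtain ⟨ξ, hξ, hmvt⟩ := exists_mem_uIcc_sub_eq_mul_sub (f := p) (a := x₀) (b := y)
        fun z _ => hp z
      have hξm := hmp' ξ (uIcc_subset_uIcc_left hy hξ)
      obtain ⟨hq₀, hq₁⟩ := hp01 y
      have hvar : p y * (1 - p y) ≤ 1 / 4 := by nlinarith [sq_nonneg (p y - 1 / 2)]
      have hQ : m * (y - x₀) ^ 2 ≤ (p y - p x₀) * (y - x₀) := by
        rw [hmvt]; nlinarith [sq_nonneg (y - x₀)]
      rw [div_mul_eq_mul_div, le_div_iff₀ (by nlinarith), mul_assoc (p' y)]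
      nlinarith [hmp' y hy, mul_nonneg hm (sq_nonneg (y - x₀)),
        mul_le_mul_of_nonneg_left hvar (mul_nonneg hm (sq_nonneg (y - x₀)))]
  rwa [bernoulliKL_self, sub_zero] at h

theorem bernoulliKL_comp_le_mul_sq (hp : ∀ y, HasDerivAt p (p' y) y)
    (hp01 : ∀ y, p y ∈ Ioo 0 1) (hp'_le : ∀ y, p' y ≤ p y * (1 - p y)) {L : ℝ}
    (hp'_mem : ∀ y, p' y ∈ Icc 0 L) :
    bernoulliKL (p x₀) (p x) ≤ L / 2 * (x - x₀) ^ 2 := by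
  have h := sub_le_mul_sq_of_hasDerivAt (c := L / 2) (x₀ := x₀) (x := x)
    (fun y _ => hasDerivAt_bernoulliKL_comp (hp01 x₀) (hp y) (hp01 y)) fun y hy => by
      obtain ⟨ξ, -, hmvt⟩ := exists_mem_uIcc_sub_eq_mul_sub (f := p) (a := x₀) (b := y)
        fun z _ => hp z
      obtain ⟨hq₀, hq₁⟩ := hp01 y
      have hQ : (p y - p x₀) * (y - x₀) ∈ Icc 0 (L * (y - x₀) ^ 2) := by
        rw [hmvt, mul_assoc, ← sq]
        exact ⟨mul_nonneg (hp'_mem ξ).1 (sq_nonneg _),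
          mul_le_mul_of_nonneg_right (hp'_mem ξ).2 (sq_nonneg _)⟩
      have hvar : 0 < p y * (1 - p y) := mul_pos hq₀ (sub_pos.2 hq₁)
      rw [div_mul_eq_mul_div, div_le_iff₀ hvar, mul_assoc (p' y)]
      calc p' y * ((p y - p x₀) * (y - x₀))
          ≤ p y * (1 - p y) * ((p y - p x₀) * (y - x₀)) :=
            mul_le_mul_of_nonneg_right (hp'_le y) hQ.1
        _ ≤ p y * (1 - p y) * (L * (y - x₀) ^ 2) := mul_le_mul_of_nonneg_left hQ.2 hvar.le
        _ = 2 * (L / 2) * (y - x₀) ^ 2 * (p y * (1 - p y)) := by ring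
  rwa [bernoulliKL_self, sub_zero] at h

end Link

noncomputable def bqrLink (τ z : ℝ) : ℝ :=
  if 0 ≤ z then 1 - τ * exp ((τ - 1) * z) else (1 - τ) * exp (τ * z)

noncomputable def bqrLinkDeriv (τ z : ℝ) : ℝ :=
  if 0 ≤ z then τ * (1 - τ) * exp ((τ - 1) * z) else τ * (1 - τ) * exp (τ * z)

theorem hasDerivAt_bqrLink (τ z : ℝ) : HasDerivAt (bqrLink τ) (bqrLinkDeriv τ z) z := by
  have hexp : ∀ c x : ℝ, HasDerivAt (fun y => exp (c * y)) (exp (c * x) * c) x := fun c x => by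
    simpa using ((hasDerivAt_id x).const_mul c).exp
  refine hasDerivAt_ite_le (g := fun y => 1 - τ * exp ((τ - 1) * y))
    (g' := fun y => τ * (1 - τ) * exp ((τ - 1) * y)) (h := fun y => (1 - τ) * exp (τ * y))
    (h' := fun y => τ * (1 - τ) * exp (τ * y)) (fun x => ?_) (fun x => ?_) (by simp) (by simp) z
  · exact ((hexp (τ - 1) x).const_mul τ).const_sub 1 |>.congr_deriv (by ring)
  · exact ((hexp τ x).const_mul (1 - τ)).congr_deriv (by ring)

section BQRLink

variable {τ : ℝ}

theorem bqrLink_mem_Ioo (hτ : τ ∈ Ioo 0 1) (z : ℝ) : bqrLink τ z ∈ Ioo 0 1 := by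
  obtain ⟨hτ₀, hτ₁⟩ := hτ
  unfold bqrLink
  split_ifs with hz
  · have : exp ((τ - 1) * z) ≤ 1 := exp_le_one_iff.2 (by nlinarith)
    constructor <;> nlinarith [exp_pos ((τ - 1) * z)]
  · have : exp (τ * z) < 1 := exp_lt_one_iff.2 (by nlinarith)
    constructor <;> nlinarith [exp_pos (τ * z)]

theorem bqrLinkDeriv_le_mul_one_sub (hτ : τ ∈ Icc 0 1) (z : ℝ) :
    bqrLinkDeriv τ z ≤ bqrLink τ z * (1 - bqrLink τ z) := by
  obtain ⟨hτ₀, hτ₁⟩ := hτ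
  unfold bqrLink bqrLinkDeriv
  split_ifs with hz
  · have : exp ((τ - 1) * z) ≤ 1 := exp_le_one_iff.2 (by nlinarith)
    nlinarith [mul_nonneg (mul_nonneg (sq_nonneg τ) (exp_pos ((τ - 1) * z)).le)
      (sub_nonneg.2 this)]
  · have : exp (τ * z) ≤ 1 := exp_le_one_iff.2 (by nlinarith)
    nlinarith [mul_nonneg (mul_nonneg (sq_nonneg (1 - τ)) (exp_pos (τ * z)).le)
      (sub_nonneg.2 this)]

theorem bqrLinkDeriv_mem_Icc (hτ : τ ∈ Icc 0 1) (z : ℝ) :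
    bqrLinkDeriv τ z ∈ Icc 0 (τ * (1 - τ)) := by
  obtain ⟨hτ₀, hτ₁⟩ := hτ
  have hvar : 0 ≤ τ * (1 - τ) := mul_nonneg hτ₀ (sub_nonneg.2 hτ₁)
  unfold bqrLinkDeriv
  split_ifs with hz
  · have : exp ((τ - 1) * z) ≤ 1 := exp_le_one_iff.2 (by nlinarith)
    exact ⟨mul_nonneg hvar (exp_pos _).le, mul_le_of_le_one_right hvar this⟩
  · have : exp (τ * z) ≤ 1 := exp_le_one_iff.2 (by nlinarith)
    exact ⟨mul_nonneg hvar (exp_pos _).le, mul_le_of_le_one_right hvar this⟩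

theorem mul_exp_neg_le_bqrLinkDeriv (hτ : τ ∈ Icc 0 1) {M z : ℝ} (hz : z ∈ Icc (-M) M) :
    τ * (1 - τ) * exp (-M) ≤ bqrLinkDeriv τ z := by
  obtain ⟨hτ₀, hτ₁⟩ := hτ
  have hvar : 0 ≤ τ * (1 - τ) := mul_nonneg hτ₀ (sub_nonneg.2 hτ₁)
  unfold bqrLinkDeriv
  split_ifs with h
  · exact mul_le_mul_of_nonneg_left (exp_le_exp.2 (by nlinarith [hz.2])) hvar
  · exact mul_le_mul_of_nonneg_left (exp_le_exp.2 (by nlinarith [hz.1])) hvar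

end BQRLink

theorem bqr_excess_risk_curvature_general (τ M : ℝ) (hτ : τ ∈ Set.Ioo (0:ℝ) 1)
    (p : ℝ → ℝ)
    (hp : ∀ z, p z = if 0 ≤ z then 1 - τ * Real.exp ((τ - 1) * z)
                     else (1 - τ) * Real.exp (τ * z))
    (E : ℝ → ℝ → ℝ)
    (hE : ∀ f fstar, E f fstar =
      -(p fstar * Real.log (p f / p fstar))
        - (1 - p fstar) * Real.log ((1 - p f) / (1 - p fstar))) :
    ∃ c₁ c₂ : ℝ, 0 < c₁ ∧ 0 < c₂ ∧ c₂ = τ * (1 - τ) / 2 ∧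
      ∀ f ∈ Set.Icc (-M) M, ∀ fstar ∈ Set.Icc (-M) M,
        c₁ * (f - fstar)^2 ≤ E f fstar ∧ E f fstar ≤ c₂ * (f - fstar)^2 := by
  obtain rfl : p = bqrLink τ := funext hp
  have hτ' := Ioo_subset_Icc_self hτ
  have hvar : 0 < τ * (1 - τ) := mul_pos hτ.1 (sub_pos.2 hτ.2)
  set m := τ * (1 - τ) * exp (-M)
  refine ⟨2 * m ^ 2, τ * (1 - τ) / 2, by positivity, by positivity, rfl,
    fun f hf fstar hfstar => ⟨?_, ?_⟩⟩ <;> rw [hE]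
  · exact mul_sq_le_bernoulliKL_comp (hasDerivAt_bqrLink τ) (bqrLink_mem_Ioo hτ) (by positivity)
      fun y hy => mul_exp_neg_le_bqrLinkDeriv hτ' (uIcc_subset_Icc hfstar hf hy)
  · exact bernoulliKL_comp_le_mul_sq (hasDerivAt_bqrLink τ) (bqrLink_mem_Ioo hτ)
      (bqrLinkDeriv_le_mul_one_sub hτ') (bqrLinkDeriv_mem_Icc hτ')

theorem bqr_excess_risk_curvature (τ M : ℝ) (hτ : τ ∈ Set.Ioo (0:ℝ) 1) (hM : 0 < M)
    (p : ℝ → ℝ)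
    (hp : ∀ z, p z = if 0 ≤ z then 1 - τ * Real.exp ((τ - 1) * z)
                     else (1 - τ) * Real.exp (τ * z))
    (E : ℝ → ℝ → ℝ)
    (hE : ∀ f fstar, E f fstar =
      -(p fstar * Real.log (p f / p fstar))
        - (1 - p fstar) * Real.log ((1 - p f) / (1 - p fstar))) :
    ∃ c₁ c₂ : ℝ, 0 < c₁ ∧ 0 < c₂ ∧ c₂ = τ * (1 - τ) / 2 ∧
      ∀ f ∈ Set.Icc (-M) M, ∀ fstar ∈ Set.Icc (-M) M,
        c₁ * (f - fstar)^2 ≤ E f fstar ∧ E f fstar ≤ c₂ * (f - fstar)^2 :=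
  bqr_excess_risk_curvature_general τ M hτ p hp E hE
end
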